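/- Let ẑ_n = argmax over x̂ ∈ P(ℂ^k) of ‖W_n x‖² and ŷ_n = W_n · ẑ_n. Then for every probability measure ν on P(ℂ^k), E_ν(d(x̂_n, ŷ_n)) ≤ f(n) := ∫ ‖∧²(v_n⋯v₁)‖ dμ^⊗n, where x̂_n = W_n · x̂₀ is the quantum trajectory started from ν. -/

import Mathlib

/-!
For a matrix `W` and vectors `x`, `z`, Lagrange's identity gives
`d(Wx, Wz) = ‖Wx ∧ Wz‖ / (‖Wx‖ ‖Wz‖)` and Cauchy–Binet gives `Wx ∧ Wz = (∧²W)(x ∧ z)`.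
Hence, for unit vectors with `‖Wx‖ ≤ ‖Wz‖`,
`d(Wx, Wz) ‖Wx‖² ≤ ‖∧²W‖ ‖Wx‖ / ‖Wz‖ ≤ ‖∧²W‖`:
the density `‖W_n x₀‖²` of `P_ν` is absorbed pointwise, and integrating the bound
against the probability measure `ν` gives `f(n)`.
-/

open MeasureTheory Filter Topology
open scoped ComplexOrder Matrix InnerProductSpace ENNReal
noncomputable section
attribute [local instance] Classical.propDecidable

abbrev Mat (k : ℕ) := Matrix (Fin k) (Fin k) ℂ
abbrev Evec (k : ℕ) := EuclideanSpace ℂ (Fin k)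

instance (k : ℕ) : MeasurableSpace (Mat k) :=
  inferInstanceAs (MeasurableSpace (Fin k → Fin k → ℂ))
instance (k : ℕ) : MeasurableSpace (Evec k) := borel _
instance (k : ℕ) : BorelSpace (Evec k) := ⟨rfl⟩
instance (k : ℕ) : MeasurableSpace (Projectivization ℂ (Evec k)) :=
  inferInstanceAs (MeasurableSpace (Quotient (projectivizationSetoid ℂ (Evec k))))

/-- The unit-norm canonical representative of a point of projective space. -/
def unitRep {k : ℕ} (x : Projectivization ℂ (Evec k)) : Evec k :=
  (‖x.rep‖⁻¹ : ℂ) • x.rep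

/-- Action of a matrix on a vector of `ℂ^k`. -/
def matVec {k : ℕ} (v : Mat k) (x : Evec k) : Evec k := Matrix.toEuclideanLin v x

/-- `Wfin (v₁, …, v_n) = v_n ⋯ v₁`. -/
def Wfin {k n : ℕ} (v : Fin n → Mat k) : Mat k := ((List.ofFn v).reverse).prod

/-- Index set for the standard orthonormal basis of `∧^p ℂ^k`. -/
abbrev WedgeIdx (k p : ℕ) := {s : Finset (Fin k) // s.card = p}

/-- The matrix of `∧^p A` in the standard basis: its entries are the `p×p` minors of `A`. -/
def wedgeMap {k : ℕ} (p : ℕ) (A : Mat k) : Matrix (WedgeIdx k p) (WedgeIdx k p) ℂ :=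
  Matrix.of fun q r =>
    (A.submatrix (fun i : Fin p => (q.1.orderIsoOfFin q.2 i : Fin k))
                 (fun j : Fin p => (r.1.orderIsoOfFin r.2 j : Fin k))).det

/-- Operator norm of `∧^p A`. -/
def wedgeNorm {k : ℕ} (p : ℕ) (A : Mat k) : ℝ :=
  ‖Matrix.toEuclideanCLM (𝕜 := ℂ) (wedgeMap p A)‖

/-- `f(n) = ∫ ‖∧²(v_n ⋯ v₁)‖ dμ^⊗n(v₁,…,v_n)`. -/
def wedgeInt {k : ℕ} (μ : Measure (Mat k)) [SigmaFinite μ] (n : ℕ) : ℝ≥0∞ :=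
  ∫⁻ v, ENNReal.ofReal (wedgeNorm 2 (Wfin v)) ∂(Measure.pi fun _ : Fin n => μ)

/-- `d(â, b̂) = (1 - |⟨a,b⟩|²/(‖a‖²‖b‖²))^{1/2}` on nonzero vectors, with the convention `0` if
one of the vectors vanishes. -/
def dVec {k : ℕ} (a b : Evec k) : ℝ :=
  if a = 0 ∨ b = 0 then 0
  else Real.sqrt (1 - ‖⟪a, b⟫_ℂ‖ ^ 2 / (‖a‖ ^ 2 * ‖b‖ ^ 2))


namespace WedgeIdx

variable {k : ℕ}

def fst (q : WedgeIdx k 2) : Fin k := q.1.orderEmbOfFin q.2 0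

def snd (q : WedgeIdx k 2) : Fin k := q.1.orderEmbOfFin q.2 1

def ofLt {s t : Fin k} (h : s < t) : WedgeIdx k 2 := ⟨{s, t}, Finset.card_pair h.ne⟩

lemma fst_lt_snd (q : WedgeIdx k 2) : q.fst < q.snd :=
  (q.1.orderEmbOfFin q.2).strictMono (by decide)

lemma pair_fst_snd (q : WedgeIdx k 2) : ({q.fst, q.snd} : Finset (Fin k)) = q.1 :=
  Finset.eq_of_subset_of_card_le
    (Finset.insert_subset (Finset.orderEmbOfFin_mem _ _ _)
      (Finset.singleton_subset_iff.2 (Finset.orderEmbOfFin_mem _ _ _)))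
    (by rw [q.2, Finset.card_pair q.fst_lt_snd.ne])

lemma orderEmbOfFin_ofLt {s t : Fin k} (h : s < t) :
    ((ofLt h).1.orderEmbOfFin (ofLt h).2 : Fin 2 → Fin k) = ![s, t] := by
  refine (Finset.orderEmbOfFin_unique _ (fun x => ?_) ?_).symm
  · fin_cases x <;> simp [ofLt]
  · intro a b hab
    fin_cases a <;> fin_cases b <;> simp_all

lemma sum_eq_sum_filter_lt {M : Type*} [AddCommMonoid M] (f : Fin k → Fin k → M) :
    ∑ q : WedgeIdx k 2, f q.fst q.snd
      = ∑ p ∈ Finset.univ.filter (fun p : Fin k × Fin k => p.1 < p.2), f p.1 p.2 := by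
  refine Finset.sum_bij' (fun q _ => (q.fst, q.snd))
    (fun p hp => ofLt (Finset.mem_filter.1 hp).2) (fun q _ => by simp [fst_lt_snd])
    (fun _ _ => Finset.mem_univ _) (fun q _ => Subtype.ext q.pair_fst_snd)
    (fun p hp => ?_) (fun _ _ => rfl)
  have h := orderEmbOfFin_ofLt (Finset.mem_filter.1 hp).2
  exact Prod.ext (congrFun h 0) (congrFun h 1)

lemma sum_add_swap {M : Type*} [AddCommMonoid M] (G : Fin k → Fin k → M)
    (hG : ∀ s, G s s = 0) :
    ∑ q : WedgeIdx k 2, (G q.fst q.snd + G q.snd q.fst) = ∑ s, ∑ t, G s t := by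
  rw [Finset.sum_add_distrib, sum_eq_sum_filter_lt, sum_eq_sum_filter_lt (fun s t => G t s),
    ← Fintype.sum_prod_type',
    ← Finset.sum_filter_add_sum_filter_not Finset.univ (fun p => p.1 < p.2)]
  congr 1
  have h_gt : ∑ p ∈ Finset.univ.filter (fun p : Fin k × Fin k => ¬p.1 < p.2), G p.1 p.2
      = ∑ p ∈ Finset.univ.filter (fun p : Fin k × Fin k => p.2 < p.1), G p.1 p.2 := by
    refine (Finset.sum_subset (fun p => by simpa using le_of_lt) fun p hp hp' => ?_).symm
    obtain ⟨s, t⟩ := p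
    obtain rfl : s = t := by simp_all [le_antisymm_iff]
    exact hG s
  rw [h_gt]
  exact Finset.sum_nbij' Prod.swap Prod.swap (by simp) (by simp) (by simp) (by simp) (by simp)

end WedgeIdx

section Wedge

variable {k : ℕ}

local notation "conj" => starRingEnd ℂ

def wedgeVec (a b : Evec k) : EuclideanSpace ℂ (WedgeIdx k 2) :=
  WithLp.toLp 2 fun q => a q.fst * b q.snd - a q.snd * b q.fst

lemma inner_eq_sum {ι : Type*} [Fintype ι] (a b : EuclideanSpace ℂ ι) :
    ⟪a, b⟫_ℂ = ∑ s, conj (a s) * b s := by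
  simp [PiLp.inner_apply, RCLike.inner_apply, mul_comm]

/-- Lagrange's identity. -/
lemma inner_wedgeVec_self (a b : Evec k) :
    ⟪wedgeVec a b, wedgeVec a b⟫_ℂ = ⟪a, a⟫_ℂ * ⟪b, b⟫_ℂ - ⟪a, b⟫_ℂ * ⟪b, a⟫_ℂ := by
  -- symmetrising this summand in `s, t` gives `|a s * b t - a t * b s|²`,
  -- while its double sum factors into inner products
  have h := WedgeIdx.sum_add_swap
    (fun s t => conj (a s * b t) * (a s * b t - a t * b s)) (fun s => by simp)
  simp only [inner_eq_sum, Finset.sum_mul_sum, ← Finset.sum_sub_distrib]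
  convert h using 2 with q _ s _
  · simp only [wedgeVec, map_sub, map_mul]
    ring
  · exact Finset.sum_congr rfl fun t _ => by simp only [map_mul]; ring

lemma norm_wedgeVec_sq (a b : Evec k) :
    ‖wedgeVec a b‖ ^ 2 = ‖a‖ ^ 2 * ‖b‖ ^ 2 - ‖⟪a, b⟫_ℂ‖ ^ 2 := by
  have h := inner_wedgeVec_self a b
  rw [inner_self_eq_norm_sq_to_K, inner_self_eq_norm_sq_to_K, inner_self_eq_norm_sq_to_K,
    ← inner_conj_symm b a, RCLike.mul_conj] at h
  exact_mod_cast h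

lemma norm_wedgeVec_le (a b : Evec k) : ‖wedgeVec a b‖ ≤ ‖a‖ * ‖b‖ := by
  refine le_of_sq_le_sq ?_ (by positivity)
  rw [norm_wedgeVec_sq, mul_pow]
  linarith [sq_nonneg ‖⟪a, b⟫_ℂ‖]

end Wedge

section CauchyBinet

variable {k : ℕ}

lemma matVec_apply (W : Mat k) (a : Evec k) (s : Fin k) :
    matVec W a s = ∑ t, W s t * a t := by
  simp [matVec, Matrix.toLpLin_apply, Matrix.mulVec, dotProduct]

lemma wedgeMap_two_apply (W : Mat k) (q r : WedgeIdx k 2) :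
    wedgeMap 2 W q r = W q.fst r.fst * W q.snd r.snd - W q.fst r.snd * W q.snd r.fst := by
  simp only [wedgeMap, Matrix.of_apply, Matrix.det_fin_two, Matrix.submatrix_apply]
  rfl

/-- The Cauchy–Binet formula for `2 × 2` minors. -/
lemma toEuclideanLin_wedgeMap_wedgeVec (W : Mat k) (a b : Evec k) :
    Matrix.toEuclideanLin (wedgeMap 2 W) (wedgeVec a b) = wedgeVec (matVec W a) (matVec W b) := by
  ext q
  have h := WedgeIdx.sum_add_swap
    (fun s t => (W q.fst s * W q.snd t - W q.fst t * W q.snd s) * (a s * b t)) (fun s => by ring)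
  simp only [Matrix.toLpLin_apply, Matrix.mulVec, dotProduct, wedgeMap_two_apply,
    wedgeVec, matVec_apply, Finset.sum_mul_sum, ← Finset.sum_sub_distrib]
  convert h using 2 with r _ s _
  · ring
  · exact Finset.sum_congr rfl fun t _ => by ring

lemma norm_wedgeVec_matVec_le (W : Mat k) (a b : Evec k) :
    ‖wedgeVec (matVec W a) (matVec W b)‖ ≤ wedgeNorm 2 W * ‖wedgeVec a b‖ := by
  rw [← toEuclideanLin_wedgeMap_wedgeVec, ← Matrix.coe_toEuclideanCLM_eq_toEuclideanLin]
  exact (Matrix.toEuclideanCLM (𝕜 := ℂ) (wedgeMap 2 W)).le_opNorm _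

end CauchyBinet

section Distance

variable {k : ℕ}

lemma dVec_eq_norm_wedgeVec_div (a b : Evec k) :
    dVec a b = ‖wedgeVec a b‖ / (‖a‖ * ‖b‖) := by
  by_cases h : a = 0 ∨ b = 0
  · rcases h with rfl | rfl <;> simp [dVec]
  rw [dVec, if_neg h, ← Real.sqrt_sq (by positivity : 0 ≤ ‖wedgeVec a b‖ / (‖a‖ * ‖b‖))]
  rw [not_or] at h
  have ha : ‖a‖ ≠ 0 := norm_ne_zero_iff.2 h.1
  have hb : ‖b‖ ≠ 0 := norm_ne_zero_iff.2 h.2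
  rw [div_pow, norm_wedgeVec_sq, mul_pow]
  field_simp

lemma dVec_matVec_mul_norm_sq_le (W : Mat k) {a z : Evec k}
    (hmax : ‖matVec W a‖ ≤ ‖matVec W z‖) :
    dVec (matVec W a) (matVec W z) * ‖matVec W a‖ ^ 2 ≤ wedgeNorm 2 W * (‖a‖ * ‖z‖) := by
  set A := matVec W a
  set Z := matVec W z
  have hratio : ‖A‖ ^ 2 / (‖A‖ * ‖Z‖) ≤ 1 :=
    div_le_one_of_le₀ (by rw [sq]; exact mul_le_mul_of_nonneg_left hmax (norm_nonneg _))
      (by positivity)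
  calc dVec A Z * ‖A‖ ^ 2 = ‖wedgeVec A Z‖ * (‖A‖ ^ 2 / (‖A‖ * ‖Z‖)) := by
        rw [dVec_eq_norm_wedgeVec_div]; ring
    _ ≤ ‖wedgeVec A Z‖ := mul_le_of_le_one_right (norm_nonneg _) hratio
    _ ≤ wedgeNorm 2 W * ‖wedgeVec a z‖ := norm_wedgeVec_matVec_le W a z
    _ ≤ wedgeNorm 2 W * (‖a‖ * ‖z‖) :=
        mul_le_mul_of_nonneg_left (norm_wedgeVec_le a z) (norm_nonneg _)

end Distance

lemma norm_unitRep {k : ℕ} (x : Projectivization ℂ (Evec k)) : ‖unitRep x‖ = 1 := by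
  rw [unitRep, norm_smul, norm_inv, Complex.norm_real, norm_norm,
    inv_mul_cancel₀ (norm_ne_zero_iff.2 x.rep_nonzero)]

theorem stmt13_general (k : ℕ) (μ : Measure (Mat k)) [SigmaFinite μ]
    (n : ℕ) (ν : Measure (Projectivization ℂ (Evec k))) [IsProbabilityMeasure ν]
    (z : (Fin n → Mat k) → Evec k)
    (hzunit : ∀ v, ‖z v‖ = 1)
    (hzmax : ∀ v, ∀ y : Evec k, ‖y‖ = 1 →
      ‖matVec (Wfin v) y‖ ≤ ‖matVec (Wfin v) (z v)‖) :
    (∫⁻ x, (∫⁻ v, ENNReal.ofReal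
        (dVec (matVec (Wfin v) (unitRep x)) (matVec (Wfin v) (z v))
          * ‖matVec (Wfin v) (unitRep x)‖ ^ 2)
      ∂(Measure.pi fun _ : Fin n => μ)) ∂ν) ≤ wedgeInt μ n := by
  calc _ ≤ ∫⁻ _, wedgeInt μ n ∂ν := by
        refine lintegral_mono fun x => lintegral_mono fun v => ENNReal.ofReal_le_ofReal ?_
        simpa [norm_unitRep, hzunit] using
          dVec_matVec_mul_norm_sq_le (Wfin v) (hzmax v _ (norm_unitRep x))
    _ = wedgeInt μ n := by simp

/-- Let `ẑ_n` be the maximum-likelihood estimator `argmax ‖W_n x‖²` and `ŷ_n = W_n · ẑ_n`.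
For every probability measure `ν` on `P(ℂ^k)`, the expectation under `P_ν` (cylinder density
`‖W_n x₀‖² dν dμ^⊗n`) of `d(x̂_n, ŷ_n)`, where `x̂_n = W_n · x̂₀`, is at most
`f(n) = ∫ ‖∧² (v_n⋯v₁)‖ dμ^⊗n`. -/
theorem stmt13 (k : ℕ) (μ : Measure (Mat k)) [SigmaFinite μ]
    (hstoch : ∀ i j, ∫ v, (vᴴ * v) i j ∂μ = (1 : Mat k) i j)
    (n : ℕ) (ν : Measure (Projectivization ℂ (Evec k))) [IsProbabilityMeasure ν]
    (z : (Fin n → Mat k) → Evec k)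
    (hzunit : ∀ v, ‖z v‖ = 1)
    (hzmax : ∀ v, ∀ y : Evec k, ‖y‖ = 1 →
      ‖matVec (Wfin v) y‖ ≤ ‖matVec (Wfin v) (z v)‖) :
    (∫⁻ x, (∫⁻ v, ENNReal.ofReal
        (dVec (matVec (Wfin v) (unitRep x)) (matVec (Wfin v) (z v))
          * ‖matVec (Wfin v) (unitRep x)‖ ^ 2)
      ∂(Measure.pi fun _ : Fin n => μ)) ∂ν) ≤ wedgeInt μ n :=
  stmt13_general k μ n ν z hzunit hzmax
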